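/- arXiv:2405.06594 — 2 statements merged into one kernel-verified Lean document; each statement's English description precedes it below -/
import Mathlib

section
/- Every subgroup of finite index in a free abelian group $\mathbb Z^{(I)}$ (free abelian on a set $I$, possibly infinite) is free abelian of the same rank, i.e., isomorphic to $\mathbb Z^{(I)}$. -/
/-!
Choose a finite set `S` of coordinates on which every coset of `H` has a representative. In
`ℤ^(I) ≅ ℤ^(S) × ℤ^(I ∖ S)` the image of `H` then projects onto the free factor `ℤ^(I ∖ S)`, so
the projection splits and `H ≅ K × ℤ^(I ∖ S)` with `K = H ∩ ℤ^(S)`. Being of finite index in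
`ℤ^(S)`, `K` is free of rank `|S|` by the Smith normal form.
-/

open Finsupp

theorem AddSubgroup.exists_finset_forall_exists_support_subset_mk_eq {ι M : Type*} [AddGroup M]
    (H : AddSubgroup (ι →₀ M)) [H.FiniteIndex] :
    ∃ S : Finset ι, ∀ q : (ι →₀ M) ⧸ H,
      ∃ y : ι →₀ M, (∀ a ∈ y.support, a ∈ S) ∧ (y : (ι →₀ M) ⧸ H) = q := by
  classical
  have := H.fintypeQuotientOfFiniteIndex
  let rep (q : (ι →₀ M) ⧸ H) : ι →₀ M := q.out
  refine ⟨Finset.univ.biUnion fun q ↦ (rep q).support, fun q ↦ ⟨rep q, ?_, q.out_eq'⟩⟩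
  exact fun a ha ↦ Finset.mem_biUnion.mpr ⟨q, Finset.mem_univ q, ha⟩

noncomputable def Finsupp.addEquivProdCompl {α M : Type*} [AddCommMonoid M] (p : α → Prop)
    [DecidablePred p] : (α →₀ M) ≃+ ({a // p a} →₀ M) × ({a // ¬p a} →₀ M) :=
  (Finsupp.domCongr (Equiv.sumCompl p).symm).trans sumFinsuppAddEquivProdFinsupp

theorem Finsupp.addEquivProdCompl_apply_snd {α M : Type*} [AddCommMonoid M] (p : α → Prop)
    [DecidablePred p] (x : α →₀ M) :
    (Finsupp.addEquivProdCompl p x).2 = x.subtypeDomain (¬ p ·) := by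
  ext a; simp [Finsupp.addEquivProdCompl]

theorem AddSubgroup.exists_mem_map_addEquivProdCompl {α M : Type*} [AddCommGroup M]
    (H : AddSubgroup (α →₀ M)) (p : α → Prop) [DecidablePred p]
    (hH : ∀ q : (α →₀ M) ⧸ H,
      ∃ y : α →₀ M, (∀ a ∈ y.support, p a) ∧ (y : (α →₀ M) ⧸ H) = q)
    (c : {a // ¬p a} →₀ M) : ∃ b, (b, c) ∈ H.map (addEquivProdCompl p).toAddMonoidHom := by
  set Ψ := addEquivProdCompl (M := M) p
  obtain ⟨y, hyp, hy⟩ := hH (Ψ.symm (0, c))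
  have hy2 : (Ψ y).2 = 0 := by
    rw [addEquivProdCompl_apply_snd, subtypeDomain_eq_zero_iff']
    exact fun a ha ↦ notMem_support_iff.mp fun h ↦ ha (hyp a h)
  refine ⟨-(Ψ y).1, -y + Ψ.symm (0, c), QuotientAddGroup.eq.mp hy, ?_⟩
  ext <;> simp [hy2]

theorem AddSubgroup.nonempty_addEquiv_comap_inl_prod {B C : Type*} [AddCommGroup B]
    [AddCommGroup C] [Module.Projective ℤ C] (H : AddSubgroup (B × C))
    (hH : ∀ c, ∃ b, (b, c) ∈ H) :
    Nonempty (H ≃+ H.comap (AddMonoidHom.inl B C) × C) := by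
  let f := (AddMonoidHom.inl B C).addSubgroupComap H
  let g := (AddMonoidHom.snd B C).comp H.subtype
  have hg : Function.Surjective g := fun c ↦
    let ⟨b, hb⟩ := hH c; ⟨⟨(b, c), hb⟩, rfl⟩
  have hf : Function.Injective f := fun y z h ↦ Subtype.ext (congrArg (fun w : H ↦ w.1.1) h)
  have hexact : Function.Exact f.toIntLinearMap g.toIntLinearMap := by
    rintro ⟨⟨b, c⟩, h⟩
    constructor
    · rintro rfl
      exact ⟨⟨b, h⟩, rfl⟩
    · rintro ⟨y, hy⟩
      rw [← hy]
      rfl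
  obtain ⟨s, hs⟩ := Module.projective_lifting_property g.toIntLinearMap LinearMap.id hg
  exact ⟨(hexact.splitSurjectiveEquiv hf ⟨s, hs⟩).1.toAddEquiv⟩

theorem AddSubgroup.finiteIndex_comap {G G' : Type*} [AddGroup G] [AddGroup G']
    (H : AddSubgroup G) [H.FiniteIndex] (f : G' →+ G) : (H.comap f).FiniteIndex := by
  rw [finiteIndex_iff, index_comap]
  exact (isFiniteRelIndex_of_finiteIndex (K := f.range)).relIndex_ne_zero

theorem AddSubgroup.nonempty_addEquiv_finsupp_of_finite {ι : Type*} [Finite ι]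
    (K : AddSubgroup (ι →₀ ℤ)) [K.FiniteIndex] : Nonempty (K ≃+ (ι →₀ ℤ)) := by
  let e := (linearEquivFunOnFinite ℤ ℤ ι).toAddEquiv
  obtain ⟨f⟩ := Int.addSubgroup_index_ne_zero_iff.mp
    ((index_map_equiv K e).trans_ne K.index_ne_zero_of_finite)
  exact ⟨((AddEquiv.addSubgroupMap e K).trans f).trans e.symm⟩

/-- Every subgroup of finite index in the free abelian group `ℤ^(I)` (free
abelian on a possibly infinite set `I`) is free abelian of the same rank, i.e.
isomorphic to `ℤ^(I)`. -/
theorem stmt6 (I : Type*) (H : AddSubgroup (I →₀ ℤ)) (hH : H.FiniteIndex) :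
    Nonempty (H ≃+ (I →₀ ℤ)) := by
  classical
  obtain ⟨S, hS⟩ := H.exists_finset_forall_exists_support_subset_mk_eq
  let Ψ := addEquivProdCompl (M := ℤ) (· ∈ S)
  let H' := H.map Ψ.toAddMonoidHom
  have : H'.FiniteIndex := ⟨(H.index_map_equiv Ψ).trans_ne hH.index_ne_zero⟩
  have := H'.finiteIndex_comap (AddMonoidHom.inl _ _)
  obtain ⟨e⟩ := H'.nonempty_addEquiv_comap_inl_prod (H.exists_mem_map_addEquivProdCompl _ hS)
  obtain ⟨f⟩ := (H'.comap (AddMonoidHom.inl _ _)).nonempty_addEquiv_finsupp_of_finite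
  exact ⟨(((AddEquiv.addSubgroupMap Ψ H).trans e).trans (f.prodCongr (AddEquiv.refl _))).trans
    Ψ.symm⟩
end

section
/- Let $G$ be a group, let $M = \mathcal M(G,A,B,C)^1$ be a Rees matrix semigroup with $A$ finite, let $X = L_{b_0}$, a free right $G$-set with basis set $A$ (i.e., $X\cong A\times G$ as right $G$-sets) carrying its left $M$-action, and let $W$ be a left $\mathbb ZG$-module. If the left $\mathbb ZM$-module $\mathbb ZL_{b_0}\otimes_{\mathbb ZG}W$ is finitely generated over $\mathbb ZM$, then $W$ is a finitely generated $\mathbb ZG$-module. Conversely, if $W$ is finitely generated over $\mathbb ZG$, then $\mathbb ZL_{b_0}\otimes_{\mathbb ZG}W$ is finitely generated over $\mathbb ZM$. -/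
/-- The action of an element `s = (a',g',b')` of the Rees matrix semigroup
`S = 𝓜(G,A,B,C)` on `ℤL_{b₀} ⊗_{ℤG} W ≅ ⨁_{a ∈ A} W = (A →₀ W)` (using the
identification `(a,g,b₀) ⊗ w ↦ single a (g•w)`):
`s • (single a w) = single a' ((g' C(b',a)) • w)`. -/
noncomputable def mAct {G A B W : Type*} [Group G] [AddCommGroup W]
    [DistribMulAction G W] (C : B × A → G) (s : A × G × B) (x : A →₀ W) :
    A →₀ W :=
  Finsupp.single s.1 (x.sum fun a w => (s.2.1 * C (s.2.2, a)) • w)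

/-- Let `S = 𝓜(G,A,B,C)` be a Rees matrix semigroup over a group `G` with `C`
normalized with respect to `a₀, b₀`, `M = S¹`, and `A` finite.  For a left
`ℤG`-module `W`, the `ℤM`-module `ℤL_{b₀} ⊗_{ℤG} W ≅ (A →₀ W)` is finitely
generated over `ℤM` if and only if `W` is finitely generated over `ℤG`.
(A module being finitely generated is expressed by: there is a finite subset
`F` such that the only additive subgroup containing `F` and closed under the
semigroup/group action is the whole module; the identity of `M = S¹` acts
trivially, so closure under `S` suffices.) -/
theorem stmt18 (G A B : Type*) [Group G] [Finite A] [Nonempty A] [Nonempty B]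
    (C : B × A → G) (a₀ : A) (b₀ : B)
    (hnorm : (∀ a : A, C (b₀, a) = 1) ∧ (∀ b : B, C (b, a₀) = 1))
    (W : Type*) [AddCommGroup W] [DistribMulAction G W] :
    (∃ F : Finset (A →₀ W), ∀ P : AddSubgroup (A →₀ W),
        (F : Set (A →₀ W)) ⊆ P →
        (∀ s : A × G × B, ∀ x ∈ P, mAct C s x ∈ P) → P = ⊤) ↔
    (∃ F : Finset W, ∀ P : AddSubgroup W,
        (F : Set W) ⊆ P → (∀ g : G, ∀ w ∈ P, g • w ∈ P) → P = ⊤) := by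
  have := Fintype.ofFinite A
  classical
  constructor
  · rintro ⟨F, hF⟩
    refine ⟨(F ×ˢ Finset.univ).image fun p => p.1 p.2, fun P hFP hGP => ?_⟩
    have key : (⨅ a : A, P.comap (Finsupp.applyAddHom a : (A →₀ W) →+ W)) = ⊤ := by
      apply hF
      · intro f hf
        simp only [SetLike.mem_coe, AddSubgroup.mem_iInf, AddSubgroup.mem_comap,
          Finsupp.applyAddHom_apply]
        intro a
        exact hFP (Finset.mem_image.mpr
          ⟨(f, a), Finset.mem_product.mpr ⟨hf, Finset.mem_univ _⟩, rfl⟩)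
      · intro s x hx
        simp only [AddSubgroup.mem_iInf, AddSubgroup.mem_comap,
          Finsupp.applyAddHom_apply] at hx ⊢
        intro a
        show (mAct C s x) a ∈ P
        unfold mAct
        rw [Finsupp.single_apply]
        split
        · rw [Finsupp.sum]
          exact AddSubgroup.sum_mem _ fun c _ => hGP _ _ (hx c)
        · exact P.zero_mem
    ext w
    simp only [AddSubgroup.mem_top, iff_true]
    have h : Finsupp.single a₀ w ∈
        (⨅ a : A, P.comap (Finsupp.applyAddHom a : (A →₀ W) →+ W)) := by
      rw [key]; trivial
    simp only [AddSubgroup.mem_iInf, AddSubgroup.mem_comap,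
      Finsupp.applyAddHom_apply] at h
    have := h a₀
    rwa [Finsupp.single_eq_same] at this
  · rintro ⟨F, hF⟩
    refine ⟨(Finset.univ ×ˢ F).image fun p => Finsupp.single p.1 p.2,
      fun P hFP hSP => ?_⟩
    have key : ∀ a : A, P.comap (Finsupp.singleAddHom a : W →+ A →₀ W) = ⊤ := by
      intro a
      apply hF
      · intro w hw
        simp only [SetLike.mem_coe, AddSubgroup.mem_comap, Finsupp.singleAddHom_apply]
        exact hFP (Finset.mem_image.mpr
          ⟨(a, w), Finset.mem_product.mpr ⟨Finset.mem_univ _, hw⟩, rfl⟩)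
      · intro g w hw
        simp only [AddSubgroup.mem_comap, Finsupp.singleAddHom_apply] at hw ⊢
        have hmem := hSP (a, g, b₀) _ hw
        unfold mAct at hmem
        dsimp only at hmem
        rw [Finsupp.sum_single_index (h := fun a' w => (g * C (b₀, a')) • w)
          (smul_zero _)] at hmem
        rwa [hnorm.1, mul_one] at hmem
    ext x
    simp only [AddSubgroup.mem_top, iff_true]
    rw [← Finsupp.sum_single x, Finsupp.sum]
    refine AddSubgroup.sum_mem _ fun a _ => ?_
    have h : x a ∈ (⊤ : AddSubgroup W) := trivial
    rw [← key a] at h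
    exact h
end
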